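/- Let a, c, e be real with a² = c² + e² and a ≠ 0, and let |ψ⟩ = a|000⟩ + c|101⟩ + e|111⟩. Then the local unitary X ⊗ M ⊗ X, where X = [[0,1],[1,0]] and M = (1/a)[[c, e],[e, -c]], satisfies (X ⊗ M ⊗ X)|ψ⟩ = |ψ⟩ and (X ⊗ M ⊗ X)² = I. -/

import Mathlib

/-!
Since `a² = c² + e²`, the matrix `M = a⁻¹ [[c, e], [e, -c]]` is a reflection: `M² = 1`, and
`M` exchanges `a|0⟩` with `c|0⟩ + e|1⟩`. The outer Pauli factors flip the first and last
qubits, so `X ⊗ M ⊗ X` exchanges `a|000⟩` with `c|101⟩ + e|111⟩`. Squaring to the identity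
follows from `X² = M² = 1` and the mixed-product property of the Kronecker product.
-/

open Matrix

/-- The state `a|000⟩ + c|101⟩ + e|111⟩`. -/
def aceState (a c e : ℝ) : Fin 2 × Fin 2 × Fin 2 → ℂ := fun p =>
  if p = (0, 0, 0) then (a : ℂ) else if p = (1, 0, 1) then (c : ℂ)
  else if p = (1, 1, 1) then (e : ℂ) else 0

open scoped Kronecker

theorem Matrix.kronecker_mul_self_eq_one {R m n : Type*} [CommSemiring R] [Fintype m]
    [DecidableEq m] [Fintype n] [DecidableEq n] {A : Matrix m m R} {B : Matrix n n R}
    (hA : A * A = 1) (hB : B * B = 1) : (A ⊗ₖ B) * (A ⊗ₖ B) = 1 := by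
  rw [← mul_kronecker_mul, hA, hB, one_kronecker_one]

theorem pauliX_mul_self {R : Type*} [Semiring R] :
    (!![0, 1; 1, 0] : Matrix (Fin 2) (Fin 2) R) * !![0, 1; 1, 0] = 1 := by
  simp [one_fin_two]

theorem reflection_mul_self {R : Type*} [CommRing R] (c e : R) :
    !![c, e; e, -c] * !![c, e; e, -c] = (c ^ 2 + e ^ 2) • (1 : Matrix (Fin 2) (Fin 2) R) := by
  ext i j
  fin_cases i <;> fin_cases j <;> simp [sq] <;> ring

theorem inv_smul_reflection_mul_self {K : Type*} [Field K] {a c e : K} (ha : a ≠ 0)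
    (hsum : a ^ 2 = c ^ 2 + e ^ 2) :
    (a⁻¹ • !![c, e; e, -c]) * (a⁻¹ • !![c, e; e, -c]) = 1 := by
  rw [smul_mul_smul_comm, reflection_mul_self, ← hsum, smul_smul, ← sq, inv_pow,
    inv_mul_cancel₀ (pow_ne_zero 2 ha), one_smul]

noncomputable def aceUnitary (a c e : ℝ) :
    Matrix (Fin 2 × Fin 2 × Fin 2) (Fin 2 × Fin 2 × Fin 2) ℂ :=
  !![0, 1; 1, 0] ⊗ₖ (((a : ℂ)⁻¹ • !![(c : ℂ), e; e, -c]) ⊗ₖ !![0, 1; 1, 0])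

theorem aceUnitary_mul_self {a c e : ℝ} (ha : a ≠ 0) (hsum : a ^ 2 = c ^ 2 + e ^ 2) :
    aceUnitary a c e * aceUnitary a c e = 1 :=
  kronecker_mul_self_eq_one pauliX_mul_self <|
    kronecker_mul_self_eq_one (inv_smul_reflection_mul_self (mod_cast ha) (mod_cast hsum))
      pauliX_mul_self

theorem aceUnitary_mulVec_aceState {a c e : ℝ} (ha : a ≠ 0) (hsum : a ^ 2 = c ^ 2 + e ^ 2) :
    aceUnitary a c e *ᵥ aceState a c e = aceState a c e := by
  have ha' : (a : ℂ) ≠ 0 := mod_cast ha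
  have hsum' : (a : ℂ) ^ 2 = c ^ 2 + e ^ 2 := mod_cast hsum
  funext ⟨i, j, k⟩
  -- four nonzero entries: the two coordinates of `M (c, e) = (a, 0)` and of `M (a, 0) = (c, e)`
  fin_cases i <;> fin_cases j <;> fin_cases k <;>
    simp [aceUnitary, aceState, mulVec, dotProduct, Fintype.sum_prod_type, Fin.sum_univ_two]
  · field_simp
    exact hsum'.symm
  · ring
  · field_simp
  · field_simp

/-- if `a² = c² + e²` and `a ≠ 0`, then with `X` the Pauli matrix
and `M = (1/a)[[c,e],[e,-c]]`, the local unitary `X ⊗ M ⊗ X` stabilizes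
`a|000⟩ + c|101⟩ + e|111⟩` and squares to the identity. -/
theorem stmt17 (a c e : ℝ) (hsum : a ^ 2 = c ^ 2 + e ^ 2) (ha : a ≠ 0) :
    (Matrix.kroneckerMap (· * ·) (!![0, 1; 1, 0] : Matrix (Fin 2) (Fin 2) ℂ)
        (Matrix.kroneckerMap (· * ·)
          (((a : ℂ))⁻¹ • !![(c : ℂ), (e : ℂ); (e : ℂ), -(c : ℂ)])
          (!![0, 1; 1, 0] : Matrix (Fin 2) (Fin 2) ℂ))).mulVec (aceState a c e) =
      aceState a c e ∧
    (Matrix.kroneckerMap (· * ·) (!![0, 1; 1, 0] : Matrix (Fin 2) (Fin 2) ℂ)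
        (Matrix.kroneckerMap (· * ·)
          (((a : ℂ))⁻¹ • !![(c : ℂ), (e : ℂ); (e : ℂ), -(c : ℂ)])
          (!![0, 1; 1, 0] : Matrix (Fin 2) (Fin 2) ℂ))) *
      (Matrix.kroneckerMap (· * ·) (!![0, 1; 1, 0] : Matrix (Fin 2) (Fin 2) ℂ)
        (Matrix.kroneckerMap (· * ·)
          (((a : ℂ))⁻¹ • !![(c : ℂ), (e : ℂ); (e : ℂ), -(c : ℂ)])
          (!![0, 1; 1, 0] : Matrix (Fin 2) (Fin 2) ℂ))) = 1 :=
  ⟨aceUnitary_mulVec_aceState ha hsum, aceUnitary_mul_self ha hsum⟩
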